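/- Let 𝒳 be a separable metrizable space with its Borel σ-algebra. Every stochastic process on 𝒳 satisfying condition C4 also satisfies condition C2. -/

import Mathlib

open MeasureTheory Filter Set Topology

noncomputable section

variable {Ω : Type*} [MeasurableSpace Ω] {𝒳 : Type*} [MeasurableSpace 𝒳]

/-- Average number of times `t ∈ 𝒯 ω`, `1 ≤ t ≤ T`, with `X t ω ∈ A`, divided by `T`. -/
def avgVisit (X : ℕ → Ω → 𝒳) (𝒯 : Ω → Set ℕ) (A : Set 𝒳) (T : ℕ) (ω : Ω) : ℝ :=
  (T : ℝ)⁻¹ * ∑ t ∈ Finset.Icc 1 T,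
    ({s : ℕ | s ∈ 𝒯 ω ∧ X s ω ∈ A}.indicator (fun _ => (1 : ℝ)) t)

/-- Limit submeasure `μ̂` of the extended process `(X_t)_{t ∈ 𝒯}`. -/
def limitSubmeasure (X : ℕ → Ω → 𝒳) (𝒯 : Ω → Set ℕ) (A : Set 𝒳) (ω : Ω) : ℝ :=
  Filter.limsup (fun T => avgVisit X 𝒯 A T ω) Filter.atTop

/-- Condition C1 for the extended process `(X_t)_{t ∈ 𝒯}`. -/
def SatisfiesC1 (P : Measure Ω) (X : ℕ → Ω → 𝒳) (𝒯 : Ω → Set ℕ) : Prop :=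
  ∀ A : ℕ → Set 𝒳, (∀ k, MeasurableSet (A k)) → Antitone A → (⋂ k, A k) = ∅ →
    Filter.Tendsto (fun k => ∫ ω, limitSubmeasure X 𝒯 (A k) ω ∂P) Filter.atTop (nhds 0)

/-- `T_i^k = ⌊2^u (1 + v·2^{-i})⌋` where `k = u·2^i + v`, `0 ≤ v < 2^i`. -/
def timeGrid (i k : ℕ) : ℕ :=
  ⌊(2 : ℝ) ^ (k / 2 ^ i) * (1 + ((k % 2 ^ i : ℕ) : ℝ) / (2 ^ i : ℝ))⌋₊

/-- `𝒯^i`: times of first appearance of the instance within its period at scale `i`. -/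
def scaleTimes (X : ℕ → Ω → 𝒳) (i : ℕ) (ω : Ω) : Set ℕ :=
  {t | 1 ≤ t ∧ ∀ k, timeGrid i k ≤ t → t < timeGrid i (k + 1) →
    ∀ t', timeGrid i k ≤ t' → t' < t → X t' ω ≠ X t ω}

/-- Condition C4. -/
def SatisfiesC4 (P : Measure Ω) (X : ℕ → Ω → 𝒳) : Prop :=
  ∀ A : ℕ → Set 𝒳, (∀ i, MeasurableSet (A i)) → Pairwise (Function.onFun Disjoint A) →
    Filter.Tendsto (fun i => ∫ ω, limitSubmeasure X (scaleTimes X i) (A i) ω ∂P)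
      Filter.atTop (nhds 0)

/-- Supremum over `T ≥ T₀` of the average visit counts. -/
def supAvgVisit (X : ℕ → Ω → 𝒳) (𝒯 : Ω → Set ℕ) (A : Set 𝒳) (T₀ : ℕ) (ω : Ω) : ℝ :=
  ⨆ T : {T : ℕ // T₀ ≤ T}, avgVisit X 𝒯 A T ω

/-- Number of sets `A k` visited by the process up to time `T`. -/
def distinctSetCount (X : ℕ → Ω → 𝒳) (A : ℕ → Set 𝒳) (T : ℕ) (ω : Ω) : ℕ :=
  Set.ncard {k : ℕ | ∃ t, 1 ≤ t ∧ t ≤ T ∧ X t ω ∈ A k}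

/-- Condition C2. -/
def SatisfiesC2 (P : Measure Ω) (X : ℕ → Ω → 𝒳) : Prop :=
  ∀ A : ℕ → Set 𝒳, (∀ k, MeasurableSet (A k)) → Pairwise (Function.onFun Disjoint A) →
    ∀ᵐ ω ∂P, Filter.Tendsto (fun T => (distinctSetCount X A T ω : ℝ) / T)
      Filter.atTop (nhds 0)

/-- Condition C5. -/
def SatisfiesC5 (P : Measure Ω) (X : ℕ → Ω → 𝒳) : Prop :=
  ∃ Ti : ℕ → ℕ, Monotone Ti ∧
    SatisfiesC1 P X (fun ω => ⋃ i, scaleTimes X i ω ∩ {t : ℕ | Ti i ≤ t})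

/-- `N_t(x) = Σ_{1 ≤ s ≤ t} 1[X_s = x]`, the occurrence count. -/
def dupCount (X : ℕ → Ω → 𝒳) (t : ℕ) (x : 𝒳) (ω : Ω) : ℕ :=
  Set.ncard {s : ℕ | 1 ≤ s ∧ s ≤ t ∧ X s ω = x}

/-- Condition C8. -/
def SatisfiesC8 (P : Measure Ω) (X : ℕ → Ω → 𝒳) : Prop :=
  ∃ Ψ : ℕ → ℕ, Monotone Ψ ∧ Filter.Tendsto Ψ Filter.atTop Filter.atTop ∧
    ∀ A : ℕ → Set 𝒳, (∀ i, MeasurableSet (A i)) → Antitone A → (⋂ i, A i) = ∅ →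
      Filter.Tendsto (fun i => ∫ ω, Filter.limsup (fun T : ℕ => (T : ℝ)⁻¹ *
          ∑ t ∈ Finset.Icc 1 T,
            ({s : ℕ | X s ω ∈ A i ∧ dupCount X s (X s ω) ω ≤ Ψ T}.indicator
              (fun _ => (1 : ℝ)) t)) Filter.atTop ∂P)
        Filter.atTop (nhds 0)

/-!
If C2 fails for a disjoint family `B`, then for some `ε > 0` the event that at least `ε T` cells
have been visited by time `T`, for arbitrarily large `T`, has positive probability. The first visit
to a cell is the first appearance of a new value, so it lies in every `𝒯^i`; and at most `a + 1`
of the visited cells have index `≤ a`. Hence for every `a` there is `b` such that, with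
probability bounded below, at some `T > a` at least `ε T / 2` times of `𝒯^i ∩ [1, T]` fall into
cells of index in `(a, b]`, at every scale `i`. Iterating yields blocks `(s j, s (j + 1)]`;
handing every `m` infinitely many of them by Cantor pairing gives disjoint sets `A m` with
`μ̂(A m) ≥ ε / 2` at scale `m` on an event of probability bounded below uniformly in `m`, which
contradicts C4.
-/

open Function
open scoped ENNReal

section Deterministic

omit [MeasurableSpace Ω] [MeasurableSpace 𝒳]

variable {X : ℕ → Ω → 𝒳} {𝒯 : Ω → Set ℕ} {A : Set 𝒳} {B : ℕ → Set 𝒳} {T : ℕ} {ω : Ω}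

lemma avgVisit_nonneg : 0 ≤ avgVisit X 𝒯 A T ω :=
  mul_nonneg (by positivity)
    (Finset.sum_nonneg fun _ _ => Set.indicator_nonneg (fun _ _ => zero_le_one) _)

lemma avgVisit_le_one : avgVisit X 𝒯 A T ω ≤ 1 := by
  have hsum : ∑ t ∈ Finset.Icc 1 T, ({s : ℕ | s ∈ 𝒯 ω ∧ X s ω ∈ A}.indicator (fun _ => (1 : ℝ)) t)
      ≤ T := by
    simpa using Finset.sum_le_card_nsmul (Finset.Icc 1 T) _ (1 : ℝ)
      fun t _ => Set.indicator_le_self' (s := {s | s ∈ 𝒯 ω ∧ X s ω ∈ A}) (fun _ _ => zero_le_one) t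
  rcases T.eq_zero_or_pos with rfl | hT
  · simp [avgVisit]
  · exact (inv_mul_le_one₀ (by positivity)).2 hsum

lemma avgVisit_mono {A' : Set 𝒳} (h : A ⊆ A') : avgVisit X 𝒯 A T ω ≤ avgVisit X 𝒯 A' T ω :=
  mul_le_mul_of_nonneg_left (Finset.sum_le_sum fun _ _ => Set.indicator_le_indicator_of_subset
    (by exact fun _ hs => ⟨hs.1, h hs.2⟩) (fun _ => zero_le_one) _) (by positivity)

lemma card_div_le_avgVisit (W : Finset ℕ) (hW : W ⊆ Finset.Icc 1 T)
    (hmem : ∀ t ∈ W, t ∈ 𝒯 ω ∧ X t ω ∈ A) : (W.card : ℝ) / T ≤ avgVisit X 𝒯 A T ω := by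
  have hcard : (W.card : ℝ) = ∑ t ∈ W,
      ({s : ℕ | s ∈ 𝒯 ω ∧ X s ω ∈ A}.indicator (fun _ => (1 : ℝ)) t) := by
    rw [Finset.sum_congr rfl fun t ht =>
      Set.indicator_of_mem (s := {s | s ∈ 𝒯 ω ∧ X s ω ∈ A}) (hmem t ht) _]
    simp
  rw [avgVisit, div_eq_inv_mul, hcard]
  exact mul_le_mul_of_nonneg_left (Finset.sum_le_sum_of_subset_of_nonneg hW
    fun _ _ _ => Set.indicator_nonneg (fun _ _ => zero_le_one) _) (by positivity)

lemma limitSubmeasure_nonneg : 0 ≤ limitSubmeasure X 𝒯 A ω :=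
  le_limsup_of_frequently_le (Frequently.of_forall fun _ => avgVisit_nonneg)
    (isBoundedUnder_of ⟨1, fun _ => avgVisit_le_one⟩)

lemma limitSubmeasure_le_one : limitSubmeasure X 𝒯 A ω ≤ 1 :=
  limsup_le_of_le (IsCoboundedUnder.of_frequently_ge
    (Frequently.of_forall fun _ => avgVisit_nonneg)) (Eventually.of_forall fun _ => avgVisit_le_one)

lemma le_limitSubmeasure_of_frequently {c : ℝ}
    (h : ∃ᶠ T in atTop, c ≤ avgVisit X 𝒯 A T ω) : c ≤ limitSubmeasure X 𝒯 A ω :=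
  le_limsup_of_frequently_le h (isBoundedUnder_of ⟨1, fun _ => avgVisit_le_one⟩)

lemma one_le_timeGrid (i k : ℕ) : 1 ≤ timeGrid i k := by
  rw [timeGrid, Nat.le_floor_iff (by positivity), Nat.cast_one]
  exact one_le_mul_of_one_le_of_one_le (one_le_pow₀ one_le_two)
    (le_add_of_nonneg_right (by positivity))

def firstVisit (X : ℕ → Ω → 𝒳) (C : Set 𝒳) (ω : Ω) : ℕ :=
  sInf {t | 1 ≤ t ∧ X t ω ∈ C}

lemma firstVisit_spec {C : Set 𝒳} {t : ℕ} (ht : 1 ≤ t) (hC : X t ω ∈ C) :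
    1 ≤ firstVisit X C ω ∧ firstVisit X C ω ≤ t ∧ X (firstVisit X C ω) ω ∈ C :=
  have hmem := Nat.sInf_mem (s := {t | 1 ≤ t ∧ X t ω ∈ C}) ⟨t, ht, hC⟩
  ⟨hmem.1, Nat.sInf_le ⟨ht, hC⟩, hmem.2⟩

/-- A first visit to `C` is in particular the first appearance of its value. -/
lemma firstVisit_mem_scaleTimes {C : Set 𝒳} {t : ℕ} (ht : 1 ≤ t) (hC : X t ω ∈ C) (i : ℕ) :
    firstVisit X C ω ∈ scaleTimes X i ω := by
  obtain ⟨h1, -, hmem⟩ := firstVisit_spec ht hC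
  refine ⟨h1, fun k hk _ t' ht' hlt heq => Nat.notMem_of_lt_sInf hlt ?_⟩
  exact ⟨(one_le_timeGrid i k).trans ht', heq ▸ hmem⟩

def visitedCells (X : ℕ → Ω → 𝒳) (B : ℕ → Set 𝒳) (T : ℕ) (ω : Ω) : Set ℕ :=
  {k | ∃ t, 1 ≤ t ∧ t ≤ T ∧ X t ω ∈ B k}

lemma visitedCells_finite (hB : Pairwise (Disjoint on B)) : (visitedCells X B T ω).Finite := by
  refine ((Set.finite_Icc 1 T).biUnion fun t _ => ?_).subset
    (fun k ⟨t, h1, h2, hk⟩ => Set.mem_biUnion ⟨h1, h2⟩ hk)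
  exact Set.Subsingleton.finite fun k hk k' hk' =>
    by_contra fun hne => Set.disjoint_left.mp (hB hne) hk hk'

/-- Distinct visited cells have distinct first visits, all of them in `𝒯^i`. -/
lemma card_div_le_avgVisit_scaleTimes (hB : Pairwise (Disjoint on B)) {K : Finset ℕ}
    (hK : ∀ k ∈ K, k ∈ visitedCells X B T ω) {A : Set 𝒳} (hKA : ∀ k ∈ K, B k ⊆ A) (i : ℕ) :
    (K.card : ℝ) / T ≤ avgVisit X (scaleTimes X i) A T ω := by
  have hfirst : ∀ k ∈ K, 1 ≤ firstVisit X (B k) ω ∧ firstVisit X (B k) ω ≤ T ∧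
      X (firstVisit X (B k) ω) ω ∈ B k := fun k hk => by
    obtain ⟨t, h1, h2, hmem⟩ := hK k hk
    obtain ⟨h1', h2', hmem'⟩ := firstVisit_spec h1 hmem
    exact ⟨h1', h2'.trans h2, hmem'⟩
  have hinj : Set.InjOn (fun k => firstVisit X (B k) ω) K := fun k hk k' hk' heq =>
    by_contra fun hne => Set.disjoint_left.mp (hB hne) (hfirst k hk).2.2 <| by
      rw [show firstVisit X (B k) ω = firstVisit X (B k') ω from heq]
      exact (hfirst k' hk').2.2
  rw [← Finset.card_image_of_injOn hinj]
  refine card_div_le_avgVisit _ (fun t ht => ?_) (fun t ht => ?_) <;>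
    obtain ⟨k, hk, rfl⟩ := Finset.mem_image.mp ht
  · exact Finset.mem_Icc.mpr ⟨(hfirst k hk).1, (hfirst k hk).2.1⟩
  · obtain ⟨t, h1, -, hmem⟩ := hK k hk
    exact ⟨firstVisit_mem_scaleTimes h1 hmem i, hKA k hk (hfirst k hk).2.2⟩

/-- At most `a + 1` visited cells have index `≤ a`, and finitely many cells are visited. -/
lemma exists_le_avgVisit_biUnion_Ioc (hB : Pairwise (Disjoint on B)) {ε : ℝ} {a : ℕ}
    (ha : 2 * ((a : ℝ) + 1) ≤ ε * T) (hT : ε ≤ (distinctSetCount X B T ω : ℝ) / T) :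
    ∃ n, ∀ i, ε / 2 ≤ avgVisit X (scaleTimes X i) (⋃ k ∈ Ioc a n, B k) T ω := by
  have hfin := visitedCells_finite (X := X) (T := T) (ω := ω) hB
  obtain ⟨n, hn⟩ := hfin.bddAbove
  have hTpos : (0 : ℝ) < T := by
    rcases T.eq_zero_or_pos with rfl | hT0
    · simp only [Nat.cast_zero, mul_zero] at ha
      linarith
    · exact_mod_cast hT0
  have hcount : ε * T ≤ hfin.toFinset.card := by
    rw [le_div_iff₀ hTpos] at hT
    rwa [← Set.ncard_eq_toFinset_card _ hfin]
  set K := hfin.toFinset.filter (a < ·)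
  set K' := hfin.toFinset.filter (¬ a < ·)
  have hsmall : (K'.card : ℝ) ≤ a + 1 := by
    have : K' ⊆ Finset.range (a + 1) := fun k hk => by
      simp only [K', Finset.mem_filter, not_lt, Finset.mem_range] at hk ⊢
      omega
    exact_mod_cast (Finset.card_le_card this).trans (Finset.card_range _).le
  have hsplit : (hfin.toFinset.card : ℝ) = K.card + K'.card := by
    exact_mod_cast (Finset.card_filter_add_card_filter_not _).symm
  refine ⟨n, fun i => le_trans ?_
    (card_div_le_avgVisit_scaleTimes hB (K := K) (fun k hk => ?_) (fun k hk => ?_) i)⟩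
  · rw [le_div_iff₀ hTpos]
    linarith
  · exact hfin.mem_toFinset.mp (Finset.mem_filter.mp hk).1
  · obtain ⟨hkV, hak⟩ := Finset.mem_filter.mp hk
    exact Set.subset_biUnion_of_mem (u := B) ⟨hak, hn (hfin.mem_toFinset.mp hkV)⟩

def blockEvent (X : ℕ → Ω → 𝒳) (B : ℕ → Set 𝒳) (c : ℝ) (a b : ℕ) : Set Ω :=
  {ω | ∃ T, a < T ∧ ∀ i, c ≤ avgVisit X (scaleTimes X i) (⋃ k ∈ Ioc a b, B k) T ω}

lemma blockEvent_mono (c : ℝ) (a : ℕ) : Monotone (blockEvent X B c a) :=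
  fun _ _ hb _ ⟨T, hT, hc⟩ => ⟨T, hT, fun i => (hc i).trans
    (avgVisit_mono (Set.biUnion_subset_biUnion_left (Set.Ioc_subset_Ioc_right hb)))⟩

lemma setOf_frequently_subset_iUnion_blockEvent (hB : Pairwise (Disjoint on B)) {ε : ℝ}
    (hε : 0 < ε) (a : ℕ) :
    {ω | ∃ᶠ T in atTop, ε ≤ (distinctSetCount X B T ω : ℝ) / T} ⊆
      ⋃ b, blockEvent X B (ε / 2) a b := by
  intro ω hω
  have hlarge : ∀ᶠ T : ℕ in atTop, 2 * ((a : ℝ) + 1) ≤ ε * T ∧ a < T :=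
    ((tendsto_natCast_atTop_atTop.const_mul_atTop hε).eventually_ge_atTop _).and
      (eventually_gt_atTop a)
  obtain ⟨T, hT, ha, haT⟩ := (Frequently.and_eventually hω hlarge).exists
  obtain ⟨b, hb⟩ := exists_le_avgVisit_biUnion_Ioc hB ha hT
  exact Set.mem_iUnion.2 ⟨b, T, haT, hb⟩

lemma pairwise_disjoint_biUnion {α ι κ : Type*} {B : ι → Set α} {I : κ → Set ι}
    (hB : Pairwise (Disjoint on B)) (hI : Pairwise (Disjoint on I)) :
    Pairwise (Disjoint on fun m => ⋃ k ∈ I m, B k) := by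
  intro m m' hne
  simp only [onFun, Set.disjoint_iUnion_left, Set.disjoint_iUnion_right]
  intro k' hk' k hk
  exact hB (by rintro rfl; exact Set.disjoint_left.mp (hI hne) hk hk')

/-- Cantor pairing hands every `m` infinitely many of the blocks `(s j, s (j + 1)]`. -/
def pairedBlocks (s : ℕ → ℕ) (m : ℕ) : Set ℕ :=
  ⋃ j ∈ (fun j => (Nat.unpair j).1) ⁻¹' {m}, Ioc (s j) (s (j + 1))

lemma pairwise_disjoint_pairedBlocks {s : ℕ → ℕ} (hs : Monotone s) :
    Pairwise (Disjoint on pairedBlocks s) :=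
  pairwise_disjoint_biUnion hs.pairwise_disjoint_on_Ioc_succ (pairwise_disjoint_fiber _)

lemma Ioc_subset_pairedBlocks (s : ℕ → ℕ) (m r : ℕ) :
    Ioc (s (Nat.pair m r)) (s (Nat.pair m r + 1)) ⊆ pairedBlocks s m :=
  Set.subset_biUnion_of_mem (u := fun j => Ioc (s j) (s (j + 1))) (by simp)

lemma le_limitSubmeasure_of_mem_limsup {s : ℕ → ℕ} (hs : StrictMono s) {c : ℝ} {m : ℕ} {ω : Ω}
    (hω : ω ∈ limsup (fun r => blockEvent X B c (s (Nat.pair m r)) (s (Nat.pair m r + 1))) atTop) :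
    c ≤ limitSubmeasure X (scaleTimes X m) (⋃ k ∈ pairedBlocks s m, B k) ω := by
  refine le_limitSubmeasure_of_frequently (frequently_atTop.2 fun N => ?_)
  obtain ⟨r, hr, T, hT, hc⟩ := frequently_atTop.1 (mem_limsup_iff_frequently_mem.1 hω) N
  refine ⟨T, ?_, (hc m).trans (avgVisit_mono
    (Set.biUnion_subset_biUnion_left (Ioc_subset_pairedBlocks s m r)))⟩
  calc N ≤ r := hr
    _ ≤ Nat.pair m r := Nat.right_le_pair m r
    _ ≤ s (Nat.pair m r) := hs.id_le _
    _ ≤ T := hT.le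

end Deterministic

lemma tendsto_zero_of_forall_not_frequently {u : ℕ → ℝ} (h0 : ∀ n, 0 ≤ u n)
    (h : ∀ q : ℕ, ¬ ∃ᶠ n in atTop, 1 / ((q : ℝ) + 1) ≤ u n) : Tendsto u atTop (𝓝 0) := by
  refine tendsto_order.2 ⟨fun a ha => Eventually.of_forall fun n => ha.trans_le (h0 n),
    fun a ha => ?_⟩
  obtain ⟨q, hq⟩ := exists_nat_one_div_lt ha
  exact (not_frequently.1 (h q)).mono fun n hn => (not_le.1 hn).trans hq

lemma le_measure_limsup_of_forall_le {μ : Measure Ω} [IsFiniteMeasure μ] {s : ℕ → Set Ω}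
    (hs : ∀ n, MeasurableSet (s n)) {c : ℝ≥0∞} (h : ∀ n, c ≤ μ (s n)) :
    c ≤ μ (limsup s atTop) := by
  have htail : Antitone fun n => ⋃ i ≥ n, s i :=
    fun n n' hnn' => Set.biUnion_subset_biUnion_left fun i hi => le_trans hnn' hi
  rw [limsup_eq_iInf_iSup_of_nat]
  simp only [Set.iInf_eq_iInter, Set.iSup_eq_iUnion]
  rw [htail.measure_iInter (fun n => (MeasurableSet.biUnion (Set.to_countable _)
    fun i _ => hs i).nullMeasurableSet) ⟨0, measure_ne_top μ _⟩]
  exact le_iInf fun n => (h n).trans (measure_mono (Set.subset_iUnion₂_of_subset n le_rfl le_rfl))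

section Measurability

variable [MeasurableEq 𝒳] {X : ℕ → Ω → 𝒳} (hX : ∀ t, Measurable (X t))
include hX

lemma measurableSet_mem_scaleTimes (i t : ℕ) : MeasurableSet {ω | t ∈ scaleTimes X i ω} := by
  refine measurableSet_setOfPred.2 <| measurable_const.and <| .forall fun k =>
    .imp measurable_const <| .imp measurable_const <| .forall fun t' =>
      .imp measurable_const <| .imp measurable_const <|
        (measurableSet_setOfPred.1 (measurableSet_eq_fun (hX t') (hX t))).not

lemma measurable_avgVisit {A : Set 𝒳} (hA : MeasurableSet A) (i T : ℕ) :
    Measurable (avgVisit X (scaleTimes X i) A T) := by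
  refine Measurable.const_mul (Finset.measurable_sum _ fun t _ => ?_) _
  have : (fun ω => {s | s ∈ scaleTimes X i ω ∧ X s ω ∈ A}.indicator (fun _ => (1 : ℝ)) t) =
      {ω | t ∈ scaleTimes X i ω ∧ X t ω ∈ A}.indicator 1 := rfl
  rw [this]
  exact measurable_one.indicator ((measurableSet_mem_scaleTimes hX i t).inter (hX t hA))

lemma measurable_limitSubmeasure {A : Set 𝒳} (hA : MeasurableSet A) (i : ℕ) :
    Measurable (limitSubmeasure X (scaleTimes X i) A) :=
  .limsup fun T => measurable_avgVisit hX hA i T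

lemma integrable_limitSubmeasure (P : Measure Ω) [IsFiniteMeasure P] {A : Set 𝒳}
    (hA : MeasurableSet A) (i : ℕ) : Integrable (limitSubmeasure X (scaleTimes X i) A) P :=
  (integrable_const 1).mono' (measurable_limitSubmeasure hX hA i).aestronglyMeasurable
    (Eventually.of_forall fun _ => by
      rw [Real.norm_eq_abs, abs_of_nonneg limitSubmeasure_nonneg]
      exact limitSubmeasure_le_one)

lemma measurableSet_blockEvent {B : ℕ → Set 𝒳} (hBm : ∀ k, MeasurableSet (B k)) (c : ℝ)
    (a b : ℕ) : MeasurableSet (blockEvent X B c a b) := by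
  simp only [blockEvent, Set.ofPred_exists, Set.ofPred_and, Set.ofPred_forall]
  exact .iUnion fun T => (MeasurableSet.const _).inter <| .iInter fun i =>
    measurableSet_le measurable_const (measurable_avgVisit hX
      (.biUnion (Set.to_countable _) fun k _ => hBm k) i T)

end Measurability

omit [MeasurableSpace 𝒳] in
lemma eventually_lt_measure_blockEvent {X : ℕ → Ω → 𝒳} {B : ℕ → Set 𝒳} (P : Measure Ω)
    (hB : Pairwise (Disjoint on B)) {ε : ℝ} (hε : 0 < ε) {c : ℝ≥0∞}
    (hc : c < P {ω | ∃ᶠ T in atTop, ε ≤ (distinctSetCount X B T ω : ℝ) / T}) (a : ℕ) :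
    ∀ᶠ b in atTop, c < P (blockEvent X B (ε / 2) a b) :=
  (tendsto_measure_iUnion_atTop (blockEvent_mono _ a)).eventually_const_lt
    (hc.trans_le (measure_mono (setOf_frequently_subset_iUnion_blockEvent hB hε a)))

lemma measure_frequently_le_distinctSetCount_div_eq_zero [MeasurableEq 𝒳] (P : Measure Ω)
    [IsFiniteMeasure P] {X : ℕ → Ω → 𝒳} (hX : ∀ t, Measurable (X t)) (hC4 : SatisfiesC4 P X)
    {B : ℕ → Set 𝒳} (hBm : ∀ k, MeasurableSet (B k)) (hB : Pairwise (Disjoint on B))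
    {ε : ℝ} (hε : 0 < ε) :
    P {ω | ∃ᶠ T in atTop, ε ≤ (distinctSetCount X B T ω : ℝ) / T} = 0 := by
  by_contra hS
  obtain ⟨c, hc0, hcS⟩ := exists_between (pos_iff_ne_zero.2 hS)
  choose next hnext hnext_gt using fun a =>
    ((eventually_lt_measure_blockEvent P hB hε hcS a).and (eventually_gt_atTop a)).exists
  set s : ℕ → ℕ := fun j => next^[j] 0
  have hs_succ (j : ℕ) : s (j + 1) = next (s j) := Function.iterate_succ_apply' next j 0
  have hs : StrictMono s := strictMono_nat_of_lt_succ fun j => hs_succ j ▸ hnext_gt _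
  set A : ℕ → Set 𝒳 := fun m => ⋃ k ∈ pairedBlocks s m, B k
  have hA (m : ℕ) : MeasurableSet (A m) := .biUnion (Set.to_countable _) fun k _ => hBm k
  have hlow (m : ℕ) : ε / 2 * c.toReal ≤ ∫ ω, limitSubmeasure X (scaleTimes X m) (A m) ω ∂P := by
    have hG : c ≤ P (limsup (fun r => blockEvent X B (ε / 2) (s (Nat.pair m r))
        (s (Nat.pair m r + 1))) atTop) :=
      le_measure_limsup_of_forall_le (fun r => measurableSet_blockEvent hX hBm _ _ _)
        fun r => hs_succ _ ▸ (hnext _).le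
    calc ε / 2 * c.toReal
        ≤ ε / 2 * P.real {ω | ε / 2 ≤ limitSubmeasure X (scaleTimes X m) (A m) ω} := by
          gcongr
          exact ENNReal.toReal_mono (measure_ne_top P _)
            (hG.trans (measure_mono fun ω hω => le_limitSubmeasure_of_mem_limsup hs hω))
      _ ≤ ∫ ω, limitSubmeasure X (scaleTimes X m) (A m) ω ∂P :=
          mul_meas_ge_le_integral_of_nonneg (ae_of_all _ fun _ => limitSubmeasure_nonneg)
            (integrable_limitSubmeasure hX P (hA m) m) _
  have hpos : 0 < ε / 2 * c.toReal :=
    mul_pos (half_pos hε) (ENNReal.toReal_pos hc0.ne' (hcS.trans (measure_lt_top P _)).ne)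
  have hle := ge_of_tendsto' (hC4 A hA (pairwise_disjoint_biUnion hB
    (pairwise_disjoint_pairedBlocks hs.monotone))) hlow
  linarith

/-- condition C4 implies condition C2. -/
theorem stmt3 [TopologicalSpace 𝒳] [TopologicalSpace.SeparableSpace 𝒳]
    [TopologicalSpace.MetrizableSpace 𝒳] [BorelSpace 𝒳]
    (P : Measure Ω) [IsProbabilityMeasure P]
    (X : ℕ → Ω → 𝒳) (hX : ∀ t, Measurable (X t))
    (hC4 : SatisfiesC4 P X) :
    SatisfiesC2 P X := by
  have : SecondCountableTopology 𝒳 := by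
    let := TopologicalSpace.pseudoMetrizableSpacePseudoMetric 𝒳
    exact UniformSpace.secondCountable_of_separable 𝒳
  intro B hBm hB
  have hnull (q : ℕ) : ∀ᵐ ω ∂P,
      ¬ ∃ᶠ T in atTop, 1 / ((q : ℝ) + 1) ≤ (distinctSetCount X B T ω : ℝ) / T :=
    measure_eq_zero_iff_ae_notMem.1
      (measure_frequently_le_distinctSetCount_div_eq_zero P hX hC4 hBm hB (by positivity))
  filter_upwards [ae_all_iff.2 hnull] with ω hω
  exact tendsto_zero_of_forall_not_frequently (fun T => by positivity) hω
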